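/- arXiv:2311.02757 — 3 statements merged into one kernel-verified Lean document; each statement's English description precedes it below -/
import Mathlib

section
/- Let n ∈ ℕ with n ≥ 1, let μ be the product measure on ℝ^n whose coordinates are i.i.d. standard Gaussian N(0,1), let v ∈ ℝ^n be nonzero, and let p ∈ (0,1). Then for every measurable function w : ℝ^n → [0,1] with ∫ w dμ = p, one has ∫ ⟨v, ω⟩ · w(ω) dμ(ω) ≤ (‖v‖₂ / √(2π)) · exp(−Φ⁻¹(p)² / 2). -/
/-! The law of `⟪v, ω⟫` under the standard Gaussian measure is `N(0, ‖v‖²)`, so the problem is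
one-dimensional. For `X ~ N(0, σ²)`, `0 ≤ w ≤ 1` and any threshold `t`, the pointwise bound
`X w ≤ (X - t)⁺ + t w` gives `E[X w] ≤ E[(X - t)⁺] + t p`. Taking `t = -σ Φ⁻¹(p)`, the threshold of
the extremal classifier `1{X > t}`, the identity `E[(Y + a)⁺] = a Φ(a) + φ(a)` for `Y ~ N(0,1)`
(`φ` the standard Gaussian density) turns the right-hand side into `σ φ(Φ⁻¹(p))`. -/

open MeasureTheory ProbabilityTheory
open scoped RealInnerProductSpace

/-- The cumulative distribution function `Φ` of the standard Gaussian measure `N(0,1)` on `ℝ`. -/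
noncomputable def Phi (x : ℝ) : ℝ := ((gaussianReal 0 1) (Set.Iic x)).toReal

/-- The inverse `Φ⁻¹` of the standard Gaussian CDF on `(0,1)`. -/
noncomputable def PhiInv (p : ℝ) : ℝ := Function.invFun Phi p

open Set Filter Topology Real
open scoped NNReal

lemma continuous_cdf (μ : Measure ℝ) [IsProbabilityMeasure μ]
    [NullSingletonClass μ] : Continuous (cdf μ) := by
  refine continuous_iff_continuousAt.2 fun x => ?_
  rw [(cdf μ).mono.continuousAt_iff_leftLim_eq_rightLim, StieltjesFunction.rightLim_eq]
  have h := (cdf μ).measure_singleton x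
  rw [measure_cdf, measure_singleton, eq_comm, ENNReal.ofReal_eq_zero] at h
  exact le_antisymm ((cdf μ).mono.leftLim_le le_rfl) (by linarith)

lemma Phi_eq_cdf : Phi = cdf (gaussianReal 0 1) := by
  ext x
  rw [cdf_eq_real, Phi, measureReal_def]

lemma Phi_PhiInv {p : ℝ} (hp : p ∈ Ioo 0 1) : Phi (PhiInv p) = p := by
  have := nullSingletonClass_gaussianReal (μ := 0) one_ne_zero
  refine Function.invFun_eq ?_
  rw [Phi_eq_cdf]
  obtain ⟨a, ha⟩ := ((tendsto_cdf_atBot _).eventually_lt_const hp.1).exists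
  obtain ⟨b, hb⟩ := ((tendsto_cdf_atTop _).eventually_const_lt hp.2).exists
  exact intermediate_value_univ a b (continuous_cdf _) ⟨ha.le, hb.le⟩

lemma Phi_eq_integral_Iic (a : ℝ) : Phi a = ∫ x in Iic a, gaussianPDFReal 0 1 x := by
  rw [Phi, gaussianReal_apply_eq_integral 0 one_ne_zero,
    ENNReal.toReal_ofReal (setIntegral_nonneg measurableSet_Iic
      fun x _ => gaussianPDFReal_nonneg 0 1 x)]

lemma gaussianPDFReal_zero_one (x : ℝ) :
    gaussianPDFReal 0 1 x = (√(2 * π))⁻¹ * Real.exp (-x ^ 2 / 2) := by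
  simp [gaussianPDFReal]

lemma hasDerivAt_gaussianPDFReal_zero_one (x : ℝ) :
    HasDerivAt (gaussianPDFReal 0 1) (-x * gaussianPDFReal 0 1 x) x := by
  have h : HasDerivAt (fun y : ℝ => -y ^ 2 / 2) (-x) x :=
    ((hasDerivAt_pow 2 x).neg.div_const 2).congr_deriv (by ring)
  rw [funext gaussianPDFReal_zero_one]
  exact (h.exp.const_mul (√(2 * π))⁻¹).congr_deriv (by ring)

lemma tendsto_gaussianPDFReal_zero_one_atBot :
    Tendsto (gaussianPDFReal 0 1) atBot (𝓝 0) := by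
  have hsq : Tendsto (fun x : ℝ => x ^ 2) atBot atTop := by
    simpa [Function.comp_def] using
      (tendsto_pow_atTop (α := ℝ) two_ne_zero).comp tendsto_neg_atBot_atTop
  have h := (tendsto_neg_atTop_atBot.comp hsq).atBot_div_const two_pos
  simpa [funext gaussianPDFReal_zero_one] using (tendsto_exp_atBot.comp h).const_mul (√(2 * π))⁻¹

lemma integrable_mul_gaussianPDFReal_zero_one :
    Integrable fun x => x * gaussianPDFReal 0 1 x := by
  refine ((integrable_mul_exp_neg_mul_sq (b := 1 / 2) one_half_pos).const_mul (√(2 * π))⁻¹).congr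
    (ae_of_all _ fun x => ?_)
  simp only [gaussianPDFReal_zero_one]; ring_nf

lemma setIntegral_Iic_mul_gaussianPDFReal_zero_one (a : ℝ) :
    ∫ x in Iic a, x * gaussianPDFReal 0 1 x = -gaussianPDFReal 0 1 a := by
  have h := integral_Iic_of_hasDerivAt_of_tendsto' (a := a) (f := fun x => -gaussianPDFReal 0 1 x)
    (fun x _ => (hasDerivAt_gaussianPDFReal_zero_one x).neg.congr_deriv (by ring))
    integrable_mul_gaussianPDFReal_zero_one.integrableOn
    (by simpa using tendsto_gaussianPDFReal_zero_one_atBot.neg)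
  simpa using h

lemma integral_max_sub_gaussianReal (a : ℝ) :
    ∫ x, max (a - x) 0 ∂gaussianReal 0 1 = a * Phi a + gaussianPDFReal 0 1 a := by
  have hind : (fun x => gaussianPDFReal 0 1 x • max (a - x) 0) =
      (Iic a).indicator fun x => a * gaussianPDFReal 0 1 x - x * gaussianPDFReal 0 1 x := by
    ext x
    by_cases hx : x ≤ a
    · simp [hx, smul_eq_mul]; ring
    · simp [hx, (not_le.1 hx).le]
  rw [integral_gaussianReal_eq_integral_smul one_ne_zero, hind,
    integral_indicator measurableSet_Iic, integral_sub, integral_const_mul, ← Phi_eq_integral_Iic,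
    setIntegral_Iic_mul_gaussianPDFReal_zero_one, sub_neg_eq_add]
  · exact ((integrable_gaussianPDFReal 0 1).const_mul a).integrableOn
  · exact integrable_mul_gaussianPDFReal_zero_one.integrableOn

lemma integral_max_add_gaussianReal (a : ℝ) :
    ∫ x, max (x + a) 0 ∂gaussianReal 0 1 = a * Phi a + gaussianPDFReal 0 1 a := by
  have h := integral_map (μ := gaussianReal 0 1) (f := fun x => max (x + a) 0)
    measurable_neg.aemeasurable (by fun_prop)
  rw [gaussianReal_map_neg, neg_zero] at h
  simpa [h, neg_add_eq_sub] using integral_max_sub_gaussianReal a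

section ThresholdBound

variable {Ω : Type*} [MeasurableSpace Ω] {P : Measure Ω}

lemma integral_mul_le_integral_max_sub_add [IsFiniteMeasure P] {X w : Ω → ℝ}
    (hX : Integrable X P) (hw : AEStronglyMeasurable w P)
    (hw01 : ∀ ω, w ω ∈ Icc 0 1) (t : ℝ) :
    ∫ ω, X ω * w ω ∂P ≤ ∫ ω, max (X ω - t) 0 ∂P + t * ∫ ω, w ω ∂P := by
  have hw_bound : ∀ᵐ ω ∂P, ‖w ω‖ ≤ 1 :=
    ae_of_all _ fun ω => by rw [Real.norm_of_nonneg (hw01 ω).1]; exact (hw01 ω).2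
  have hw_int : Integrable w P := (integrable_const 1).mono' hw hw_bound
  have hpointwise : ∀ ω, X ω * w ω ≤ max (X ω - t) 0 + t * w ω := fun ω => by
    obtain ⟨h0, h1⟩ := hw01 ω
    rcases le_total (X ω - t) 0 with h | h
    · nlinarith [le_max_right (X ω - t) 0]
    · nlinarith [le_max_left (X ω - t) 0]
  have hmax_int : Integrable (fun ω => max (X ω - t) 0) P :=
    (hX.sub (integrable_const t)).pos_part
  rw [← integral_const_mul, ← integral_add hmax_int (hw_int.const_mul t)]
  exact integral_mono (hX.mul_bdd hw hw_bound) (hmax_int.add (hw_int.const_mul t)) hpointwise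

lemma integral_max_add_hasLaw_gaussianReal {X : Ω → ℝ} {σ : ℝ≥0}
    (hX : HasLaw X (gaussianReal 0 (σ ^ 2)) P) (a : ℝ) :
    ∫ ω, max (X ω + σ * a) 0 ∂P = σ * (a * Phi a + gaussianPDFReal 0 1 a) := by
  have hlaw : gaussianReal 0 (σ ^ 2) = (gaussianReal 0 1).map ((σ : ℝ) * ·) := by
    rw [gaussianReal_map_const_mul, mul_zero, mul_one]
    congr 1
  have h := hX.integral_comp (f := fun x => max (x + σ * a) 0) (by fun_prop)
  rw [hlaw, integral_map (by fun_prop) (by fun_prop)] at h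
  calc ∫ ω, max (X ω + σ * a) 0 ∂P = ∫ x, max (σ * x + σ * a) 0 ∂gaussianReal 0 1 := h
    _ = ∫ x, σ * max (x + a) 0 ∂gaussianReal 0 1 := by
        congr with x
        rw [mul_max_of_nonneg _ _ σ.coe_nonneg, mul_zero, mul_add]
    _ = σ * (a * Phi a + gaussianPDFReal 0 1 a) := by
        rw [integral_const_mul, integral_max_add_gaussianReal]

theorem integral_mul_le_of_hasLaw_gaussianReal {X w : Ω → ℝ} {σ : ℝ≥0}
    (hX : HasLaw X (gaussianReal 0 (σ ^ 2)) P) (hw : AEStronglyMeasurable w P)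
    (hw01 : ∀ ω, w ω ∈ Icc 0 1) {p : ℝ} (hp : p ∈ Ioo 0 1) (hwp : ∫ ω, w ω ∂P = p) :
    ∫ ω, X ω * w ω ∂P ≤ σ * gaussianPDFReal 0 1 (PhiInv p) := by
  have := hX.isProbabilityMeasure
  have hX_int : Integrable X P :=
    (integrable_map_measure aestronglyMeasurable_id hX.aemeasurable).1
      (hX.map_eq ▸ IsGaussian.integrable_id)
  calc ∫ ω, X ω * w ω ∂P
      ≤ ∫ ω, max (X ω - -(σ * PhiInv p)) 0 ∂P + -(σ * PhiInv p) * p := by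
        rw [← hwp]; exact integral_mul_le_integral_max_sub_add hX_int hw hw01 _
    _ = σ * gaussianPDFReal 0 1 (PhiInv p) := by
        simp_rw [sub_neg_eq_add, integral_max_add_hasLaw_gaussianReal hX, Phi_PhiInv hp]
        ring

end ThresholdBound

lemma hasLaw_inner_stdGaussian {E : Type*} [NormedAddCommGroup E] [InnerProductSpace ℝ E]
    [FiniteDimensional ℝ E] [MeasurableSpace E] [BorelSpace E] (v : E) :
    HasLaw (fun ω => ⟪v, ω⟫) (gaussianReal 0 (‖v‖₊ ^ 2)) (stdGaussian E) where
  aemeasurable := by fun_prop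
  map_eq := by
    have h := IsGaussian.map_eq_gaussianReal (μ := stdGaussian E) (innerSL ℝ v)
    rw [integral_strongDual_stdGaussian, variance_dual_stdGaussian, innerSL_apply_norm] at h
    convert h using 2
    · ext; simp
    · rw [← coe_nnnorm, ← NNReal.coe_pow, Real.toNNReal_coe]

theorem stmt_4_general
    (n : ℕ)
    (μ : Measure (EuclideanSpace ℝ (Fin n)))
    (hμ : μ = Measure.map (WithLp.toLp 2) (Measure.pi (fun _ => gaussianReal 0 1)))
    (v : EuclideanSpace ℝ (Fin n))
    (p : ℝ) (hp : p ∈ Set.Ioo (0 : ℝ) 1)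
    (w : EuclideanSpace ℝ (Fin n) → ℝ) (hw : Measurable w)
    (hw01 : ∀ ω, w ω ∈ Set.Icc (0 : ℝ) 1)
    (hwp : ∫ ω, w ω ∂μ = p) :
    ∫ ω, ⟪v, ω⟫ * w ω ∂μ ≤
      ‖v‖ / Real.sqrt (2 * Real.pi) * Real.exp (-(PhiInv p) ^ 2 / 2) := by
  rw [hμ, map_pi_eq_stdGaussian] at hwp ⊢
  calc ∫ ω, ⟪v, ω⟫ * w ω ∂stdGaussian _ ≤ ‖v‖₊ * gaussianPDFReal 0 1 (PhiInv p) :=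
        integral_mul_le_of_hasLaw_gaussianReal (hasLaw_inner_stdGaussian v)
          hw.aestronglyMeasurable hw01 hp hwp
    _ = ‖v‖ / Real.sqrt (2 * Real.pi) * Real.exp (-(PhiInv p) ^ 2 / 2) := by
        rw [coe_nnnorm, gaussianPDFReal_zero_one]; ring

/-- **Lemma A.3 (optimization value)**: among all measurable `w : ℝⁿ → [0,1]` with Gaussian
mean `p`, the correlation with the linear functional `ω ↦ ⟨v, ω⟩` is at most
`(‖v‖₂/√(2π)) · exp(−Φ⁻¹(p)²/2)`. -/
theorem stmt_4
    (n : ℕ) (hn : 1 ≤ n)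
    (μ : Measure (EuclideanSpace ℝ (Fin n)))
    (hμ : μ = Measure.map (WithLp.toLp 2) (Measure.pi (fun _ => gaussianReal 0 1)))
    (v : EuclideanSpace ℝ (Fin n)) (hv : v ≠ 0)
    (p : ℝ) (hp : p ∈ Set.Ioo (0 : ℝ) 1)
    (w : EuclideanSpace ℝ (Fin n) → ℝ) (hw : Measurable w)
    (hw01 : ∀ ω, w ω ∈ Set.Icc (0 : ℝ) 1)
    (hwp : ∫ ω, w ω ∂μ = p) :
    ∫ ω, ⟪v, ω⟫ * w ω ∂μ ≤
      ‖v‖ / Real.sqrt (2 * Real.pi) * Real.exp (-(PhiInv p) ^ 2 / 2) :=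
  stmt_4_general n μ hμ v p hp w hw hw01 hwp
end

section
/- Let α be a finite type and let p, q : α → ℝ be probability mass functions on α (nonnegative, each summing to 1). Let r > 0, define S₁ = {z ∈ α : p(z) > r·q(z)} and S₂ = {z ∈ α : p(z) = r·q(z)}, let S₃ ⊆ S₂, and set S = S₁ ∪ S₃. Let w : α → ℝ be any function with 0 ≤ w(z) ≤ 1 for all z (representing the probability that a possibly randomized binary classifier outputs 1 at z). If Σ_{z ∈ α} p(z)·w(z) ≥ Σ_{z ∈ S} p(z), then Σ_{z ∈ α} q(z)·w(z) ≥ Σ_{z ∈ S} q(z). -/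
/-- **Lemma A.4 (Neyman–Pearson-type comparison on a finite space)**: if a randomized binary
classifier `w` accepts under `p` with probability at least `p(S)`, where
`S = S₁ ∪ S₃` with `S₁ = {p > r·q}` and `S₃ ⊆ S₂ = {p = r·q}`, then it accepts under `q`
with probability at least `q(S)`. -/
theorem stmt_8 {α : Type*} [Fintype α]
    (p q : α → ℝ) (hp0 : ∀ z, 0 ≤ p z) (hq0 : ∀ z, 0 ≤ q z)
    (hp1 : ∑ z, p z = 1) (hq1 : ∑ z, q z = 1)
    (r : ℝ) (hr : 0 < r)
    (S₁ S₂ : Set α)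
    (hS1 : S₁ = {z | r * q z < p z})
    (hS2 : S₂ = {z | p z = r * q z})
    (S₃ : Set α) (hS3 : S₃ ⊆ S₂)
    (S : Set α) (hS : S = S₁ ∪ S₃)
    (w : α → ℝ) (hw : ∀ z, 0 ≤ w z ∧ w z ≤ 1)
    (hpw : ∑ z, S.indicator p z ≤ ∑ z, p z * w z) :
    ∑ z, S.indicator q z ≤ ∑ z, q z * w z := by
  classical
  have key : ∀ z, p z * w z - S.indicator p z ≤ r * (q z * w z - S.indicator q z) := by
    intro z
    by_cases hz : z ∈ S
    · rw [Set.indicator_of_mem hz, Set.indicator_of_mem hz]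
      have hpq : r * q z ≤ p z := by
        rw [hS] at hz
        rcases hz with h1 | h3
        · rw [hS1] at h1; exact le_of_lt h1
        · have := hS3 h3; rw [hS2] at this; exact le_of_eq this.symm
      have hw1 : w z - 1 ≤ 0 := by linarith [(hw z).2]
      nlinarith
    · rw [Set.indicator_of_notMem hz, Set.indicator_of_notMem hz]
      have hpq : p z ≤ r * q z := by
        have : z ∉ S₁ := fun h => hz (hS ▸ Or.inl h)
        rw [hS1] at this
        simpa using le_of_not_gt this
      nlinarith [(hw z).1]
  have hsum := Finset.sum_le_sum (fun z (_ : z ∈ Finset.univ) => key z)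
  rw [Finset.sum_sub_distrib, ← Finset.mul_sum, Finset.sum_sub_distrib] at hsum
  nlinarith
end

section
/- Fix n ∈ ℕ and β ∈ (1/2, 1), and let Γ be a random vector in {0,1}^n whose coordinates are independent, each equal to 0 with probability β and to 1 with probability 1−β. Let h : {0,1}^n → {0,1} be any function, and let a, Δ ∈ {0,1}^n. For i ∈ ℤ define the level set H_i = {z ∈ {0,1}^n : ‖z ⊕ a ⊕ Δ‖₀ − ‖z ⊕ a‖₀ = i}. Let μ ∈ ℤ, let H' ⊆ H_μ be any subset, and set H = (⋃_{i > μ} H_i) ∪ H'. If P(a ⊕ Γ ∈ H) ≤ P(h(a ⊕ Γ) = 1), then P(h(a ⊕ Δ ⊕ Γ) = 1) ≥ P(a ⊕ Δ ⊕ Γ ∈ H). -/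
/-! A Neyman–Pearson argument. The laws of `a ⊕ Γ` and `a ⊕ Δ ⊕ Γ` have point masses
`βⁿ rᵏ` with `r = (1 - β)/β ∈ (0, 1)` and `k` the Hamming weight of `z ⊕ a`, resp. `z ⊕ a ⊕ Δ`,
so their likelihood ratio at `z` is `r ^ (‖z ⊕ a ⊕ Δ‖₀ - ‖z ⊕ a‖₀)`. Hence the ratio is at most
`rᵐ` on `H` and at least `rᵐ` off `H`, and among all events of no larger probability under the
first law, `H` has the smallest probability under the second. -/

open MeasureTheory ProbabilityTheory
open scoped ENNReal

/-- The Bernoulli flip-noise distribution on `{0,1} = ZMod 2`: it takes the value `0` with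
probability `β` and the value `1` with probability `1 − β`. -/
noncomputable def flipNoise (β : ℝ) : Measure (ZMod 2) :=
  ENNReal.ofReal β • Measure.dirac 0 + ENNReal.ofReal (1 - β) • Measure.dirac 1

namespace MeasureTheory.Measure

variable {α : Type*} [MeasurableSpace α] {P Q : Measure α}

theorem neyman_pearson [IsFiniteMeasure P] {H B : Set α} (hH : MeasurableSet H)
    (hB : MeasurableSet B) {c : ℝ≥0∞} (hle : ∀ s ⊆ H, Q s ≤ c * P s)
    (hge : ∀ s ⊆ Hᶜ, c * P s ≤ Q s) (hPB : P H ≤ P B) : Q H ≤ Q B := by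
  have hP : P (H \ B) ≤ P (B \ H) := by
    rw [← measure_inter_add_sdiff H hB, ← measure_inter_add_sdiff B hH, Set.inter_comm] at hPB
    exact (ENNReal.add_le_add_iff_left (measure_ne_top _ _)).1 hPB
  calc Q H = Q (H ∩ B) + Q (H \ B) := (measure_inter_add_sdiff H hB).symm
    _ ≤ Q (H ∩ B) + c * P (H \ B) := by gcongr; exact hle _ Set.sdiff_subset
    _ ≤ Q (B ∩ H) + c * P (B \ H) := by rw [Set.inter_comm]; gcongr
    _ ≤ Q (B ∩ H) + Q (B \ H) := by gcongr; exact hge _ fun x hx => hx.2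
    _ = Q B := measure_inter_add_sdiff B hH

variable [Finite α] [MeasurableSingletonClass α] {c : ℝ≥0∞} {s : Set α}

theorem apply_le_mul_apply_of_forall_singleton (h : ∀ x ∈ s, Q {x} ≤ c * P {x}) :
    Q s ≤ c * P s := by
  have hs := s.toFinite
  rw [← hs.coe_toFinset, ← sum_measure_singleton, ← sum_measure_singleton, Finset.mul_sum]
  exact Finset.sum_le_sum fun x hx => h x (hs.mem_toFinset.1 hx)

theorem mul_apply_le_apply_of_forall_singleton (h : ∀ x ∈ s, c * P {x} ≤ Q {x}) :
    c * P s ≤ Q s := by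
  have hs := s.toFinite
  rw [← hs.coe_toFinset, ← sum_measure_singleton, ← sum_measure_singleton, Finset.mul_sum]
  exact Finset.sum_le_sum fun x hx => h x (hs.mem_toFinset.1 hx)

end MeasureTheory.Measure

instance (β : ℝ) : IsFiniteMeasure (flipNoise β) where
  measure_univ_lt_top := by simp [flipNoise]

theorem flipNoise_singleton (β : ℝ) (x : ZMod 2) :
    flipNoise β {x} = ENNReal.ofReal (if x = 0 then β else 1 - β) := by
  obtain rfl | rfl : x = 0 ∨ x = 1 := by decide +revert
  all_goals simp [flipNoise, Set.indicator]

variable {ι : Type*} [Fintype ι] {β : ℝ}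

theorem pi_flipNoise_singleton (hβ₀ : 0 < β) (hβ₁ : β ≤ 1) (z : ι → ZMod 2) :
    (Measure.pi fun _ : ι => flipNoise β) {z}
      = ENNReal.ofReal (β ^ Fintype.card ι * ((1 - β) / β) ^ hammingNorm z) := by
  classical
  have hfactor : ∀ x : ZMod 2,
      (if x = 0 then β else 1 - β) = β * ((1 - β) / β) ^ (if x ≠ 0 then 1 else 0) := by
    intro x
    rcases eq_or_ne x 0 with hx | hx
    · simp [hx]
    · rw [if_neg hx, if_pos hx, pow_one]
      field_simp
  rw [← Set.univ_pi_singleton, Measure.pi_pi]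
  simp_rw [flipNoise_singleton]
  rw [← ENNReal.ofReal_prod_of_nonneg fun i _ => by split_ifs <;> linarith]
  simp_rw [hfactor, Finset.prod_mul_distrib, Finset.prod_pow_eq_pow_sum, Finset.prod_const,
    ← Finset.card_filter, Finset.card_univ]
  rfl

-- The law of `b ⊕ Γ`.
noncomputable def noisyLaw (β : ℝ) (b : ι → ZMod 2) : Measure (ι → ZMod 2) :=
  (Measure.pi fun _ : ι => flipNoise β).map (b + ·)

instance (β : ℝ) (b : ι → ZMod 2) : IsFiniteMeasure (noisyLaw β b) := by
  unfold noisyLaw; infer_instance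

theorem measure_add_mem_eq_noisyLaw (β : ℝ) (b : ι → ZMod 2) (S : Set (ι → ZMod 2)) :
    (Measure.pi fun _ : ι => flipNoise β) {γ | b + γ ∈ S} = noisyLaw β b S :=
  (Measure.map_apply (measurable_const_add b) (.of_discrete)).symm

theorem noisyLaw_singleton (hβ₀ : 0 < β) (hβ₁ : β ≤ 1) (b z : ι → ZMod 2) :
    noisyLaw β b {z}
      = ENNReal.ofReal (β ^ Fintype.card ι * ((1 - β) / β) ^ hammingNorm (z + b)) := by
  rw [noisyLaw, Measure.map_apply (measurable_const_add b) (.of_discrete),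
    Set.preimage_add_left_singleton, pi_flipNoise_singleton hβ₀ hβ₁, ZModModule.neg_eq_self,
    add_comm]

theorem flipRatio_mem_Ioc (hβ₀ : 1 / 2 ≤ β) (hβ₁ : β < 1) : (1 - β) / β ∈ Set.Ioc 0 1 :=
  ⟨div_pos (by linarith) (by linarith), (div_le_one (by linarith)).2 (by linarith)⟩

section RatioPowers

variable {r : ℝ} {k l : ℕ} {m : ℤ}

theorem pow_le_zpow_mul_pow (hr : r ∈ Set.Ioc 0 1) (h : m ≤ (k : ℤ) - l) :
    r ^ k ≤ r ^ m * r ^ l := by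
  rw [← zpow_natCast, ← zpow_natCast, ← zpow_add₀ hr.1.ne']
  exact zpow_le_zpow_right_of_le_one₀ hr.1 hr.2 (by omega)

theorem zpow_mul_pow_le_pow (hr : r ∈ Set.Ioc 0 1) (h : (k : ℤ) - l ≤ m) :
    r ^ m * r ^ l ≤ r ^ k := by
  rw [← zpow_natCast, ← zpow_natCast, ← zpow_add₀ hr.1.ne']
  exact zpow_le_zpow_right_of_le_one₀ hr.1 hr.2 (by omega)

end RatioPowers

section LikelihoodRatio

variable {b Δ z : ι → ZMod 2} {m : ℤ}

theorem noisyLaw_add_singleton_le (hβ₀ : 1 / 2 ≤ β) (hβ₁ : β < 1)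
    (h : m ≤ (hammingNorm (z + b + Δ) : ℤ) - hammingNorm (z + b)) :
    noisyLaw β (b + Δ) {z} ≤ ENNReal.ofReal (((1 - β) / β) ^ m) * noisyLaw β b {z} := by
  have hr := flipRatio_mem_Ioc hβ₀ hβ₁
  rw [noisyLaw_singleton (by linarith) hβ₁.le, noisyLaw_singleton (by linarith) hβ₁.le,
    ← ENNReal.ofReal_mul (zpow_nonneg hr.1.le _), mul_left_comm, ← add_assoc]
  gcongr
  exact pow_le_zpow_mul_pow hr h

theorem le_noisyLaw_add_singleton (hβ₀ : 1 / 2 ≤ β) (hβ₁ : β < 1)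
    (h : (hammingNorm (z + b + Δ) : ℤ) - hammingNorm (z + b) ≤ m) :
    ENNReal.ofReal (((1 - β) / β) ^ m) * noisyLaw β b {z} ≤ noisyLaw β (b + Δ) {z} := by
  have hr := flipRatio_mem_Ioc hβ₀ hβ₁
  rw [noisyLaw_singleton (by linarith) hβ₁.le, noisyLaw_singleton (by linarith) hβ₁.le,
    ← ENNReal.ofReal_mul (zpow_nonneg hr.1.le _), mul_left_comm, ← add_assoc]
  gcongr
  exact zpow_mul_pow_le_pow hr h

end LikelihoodRatio

/-- **Theorem 3 (Positive Probability Lower Bound)**, with the likelihood-ratio level sets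
`H_i = {z : ‖z ⊕ a ⊕ Δ‖₀ − ‖z ⊕ a‖₀ = i}` made explicit via Hamming weights: if
`H = (⋃_{i > μ} H_i) ∪ H'` with `H' ⊆ H_μ` satisfies `P(a ⊕ Γ ∈ H) ≤ P(h(a ⊕ Γ) = 1)`,
then `P(h(a ⊕ Δ ⊕ Γ) = 1) ≥ P(a ⊕ Δ ⊕ Γ ∈ H)`. Here `⊕` is coordinatewise XOR,
i.e. addition in `ZMod 2`, and `‖·‖₀` is the Hamming weight. -/
theorem stmt_14
    (n : ℕ) (β : ℝ) (hβ : β ∈ Set.Ioo (1 / 2 : ℝ) 1)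
    (μmeas : Measure (Fin n → ZMod 2))
    (hμmeas : μmeas = Measure.pi (fun _ => flipNoise β))
    (h : (Fin n → ZMod 2) → Bool)
    (a Δ : Fin n → ZMod 2) (m : ℤ)
    (H' : Set (Fin n → ZMod 2))
    (hH' : H' ⊆ {z | (hammingNorm (z + a + Δ) : ℤ) - (hammingNorm (z + a) : ℤ) = m})
    (H : Set (Fin n → ZMod 2))
    (hH : H = {z | m < (hammingNorm (z + a + Δ) : ℤ) - (hammingNorm (z + a) : ℤ)} ∪ H')
    (hyp : μmeas {γ | a + γ ∈ H} ≤ μmeas {γ | h (a + γ) = true}) :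
    μmeas {γ | a + Δ + γ ∈ H} ≤ μmeas {γ | h (a + Δ + γ) = true} := by
  subst hμmeas hH
  change _ ≤ Measure.pi _ {γ | a + γ ∈ {z | h z = true}} at hyp
  change _ ≤ Measure.pi _ {γ | a + Δ + γ ∈ {z | h z = true}}
  simp only [measure_add_mem_eq_noisyLaw] at hyp ⊢
  refine Measure.neyman_pearson (c := ENNReal.ofReal (((1 - β) / β) ^ m)) .of_discrete
    .of_discrete (fun s hs => ?_) (fun s hs => ?_) hyp
  · refine Measure.apply_le_mul_apply_of_forall_singleton fun z hz => ?_
    refine noisyLaw_add_singleton_le hβ.1.le hβ.2 ?_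
    rcases hs hz with hlt | hz'
    exacts [hlt.le, (hH' hz').ge]
  · refine Measure.mul_apply_le_apply_of_forall_singleton fun z hz => ?_
    exact le_noisyLaw_add_singleton hβ.1.le hβ.2 (not_lt.1 fun hlt => hs hz (Or.inl hlt))
end
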